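/- arXiv:1307.6865 — 4 statements merged into one kernel-verified Lean document; each statement's English description precedes it below -/
import Mathlib

section
/- (Proposition 1, part (iii), core computation) The normalized Wick double sum arising in Var(T_n) converges: lim_{n→∞} (1/n) Σ_{i=1}^{n-1} Σ_{j=1}^{n-1} ( E[e^{-α|t_{i+1}-t_j| - α|t_{j+1}-t_i|}] + E[e^{-α|t_{i+1}-t_{j+1}| - α|t_i-t_j|}] ) = 1 + g(2α) + 4 g(α)² (1 + K), where K = g(2α)/(1 - g(2α)); equivalently the limit equals 1 + g(2α) + 4g(α)²/(1 - g(2α)). Multiplied by η², this is the paper's asymptotic value of n·Var(T_n). -/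
/-!
For `i < j` the two exponents in the `(i, j)` summand both equal
`α Δᵢ + α Δⱼ + 2α (Δᵢ₊₁ + ⋯ + Δⱼ₋₁)`, so by independence each expectation factorises as
`g(α)² g(2α)^(j-i-1)`; on the diagonal the two terms are `g(2α)` and `1`. Hence the summand is
`u |i - j|` for a summable kernel `u`, and for such Toeplitz double sums the increments
`S (n + 1) - S n` tend to `u 0 + 2 ∑_{m ≥ 1} u m`, so by Cesàro `S n / n` does too. For our kernel
this limit is `1 + g(2α) + 4 g(α)² / (1 - g(2α))`.
-/

open MeasureTheory ProbabilityTheory Real Filter Topology Finset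

section ToeplitzSum

lemma sum_range_comp_dist_right (u : ℕ → ℝ) (m : ℕ) :
    ∑ i ∈ range m, u (Nat.dist i m) = ∑ k ∈ range m, u (k + 1) := by
  rw [← sum_range_reflect]
  refine sum_congr rfl fun k hk => ?_
  have := mem_range.mp hk
  rw [Nat.dist_eq_sub_of_le (by omega), show m - (m - 1 - k) = k + 1 by omega]

lemma sum_range_succ_sum_range_succ_comp_dist (u : ℕ → ℝ) (m : ℕ) :
    ∑ i ∈ range (m + 1), ∑ j ∈ range (m + 1), u (Nat.dist i j)
      = ∑ i ∈ range m, ∑ j ∈ range m, u (Nat.dist i j) + u 0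
        + 2 * ∑ k ∈ range m, u (k + 1) := by
  simp only [sum_range_succ, sum_add_distrib, Nat.dist_self]
  simp only [Nat.dist_comm m, sum_range_comp_dist_right]
  ring

lemma sum_Icc_one_sum_Icc_one_comp_dist (u : ℕ → ℝ) (m : ℕ) :
    ∑ i ∈ Icc 1 m, ∑ j ∈ Icc 1 m, u (Nat.dist i j)
      = ∑ i ∈ range m, ∑ j ∈ range m, u (Nat.dist i j) := by
  simp only [← Ico_add_one_right_eq_Icc, sum_Ico_eq_sum_range, Nat.add_sub_cancel,
    Nat.dist_add_add_left]

theorem tendsto_inv_mul_sum_range_sum_range_comp_dist {u : ℕ → ℝ} {σ : ℝ} (hu : HasSum u σ) :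
    Tendsto (fun n : ℕ => (n : ℝ)⁻¹ * ∑ i ∈ range n, ∑ j ∈ range n, u (Nat.dist i j))
      atTop (𝓝 (2 * σ - u 0)) := by
  set T : ℕ → ℝ := fun n => ∑ i ∈ range n, ∑ j ∈ range n, u (Nat.dist i j)
  have htail : HasSum (fun k => u (k + 1)) (σ - u 0) := by
    simpa using (hasSum_nat_add_iff' 1).mpr hu
  have hincr : Tendsto (fun m => T (m + 1) - T m) atTop (𝓝 (u 0 + 2 * (σ - u 0))) :=
    (tendsto_const_nhds.add (htail.tendsto_sum_nat.const_mul 2)).congr fun m => by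
      simp only [T, sum_range_succ_sum_range_succ_comp_dist]
      ring
  rw [show 2 * σ - u 0 = u 0 + 2 * (σ - u 0) by ring]
  refine hincr.cesaro.congr fun n => ?_
  rw [sum_range_sub (f := T), show T 0 = 0 by simp [T], sub_zero]

lemma tendsto_inv_mul_comp_sub_one {a : ℕ → ℝ} {L : ℝ}
    (h : Tendsto (fun n : ℕ => (n : ℝ)⁻¹ * a n) atTop (𝓝 L)) :
    Tendsto (fun n : ℕ => (n : ℝ)⁻¹ * a (n - 1)) atTop (𝓝 L) := by
  rw [← tendsto_add_atTop_iff_nat 1]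
  have := (tendsto_natCast_div_add_atTop (1 : ℝ)).mul h
  rw [one_mul] at this
  refine this.congr' ?_
  filter_upwards [eventually_ge_atTop 1] with n hn
  have : (n : ℝ) ≠ 0 := Nat.cast_ne_zero.mpr (by omega)
  simp only [Nat.add_sub_cancel, Nat.cast_add, Nat.cast_one]
  field_simp

end ToeplitzSum

section PartialSums

/-- The weights of `Δ_i, …, Δ_j` in the exponent of either off-diagonal Wick term: the two
increments `[t_i, t_{i+1}]` and `[t_j, t_{j+1}]` are counted once, the gap between them twice. -/
noncomputable def overlapWeight (α : ℝ) (i j k : ℕ) : ℝ :=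
  if k = i ∨ k = j then α else 2 * α

variable {x : ℕ → ℝ} {i j : ℕ}

lemma abs_sum_range_sub_sum_range (hx : ∀ k, 0 ≤ x k) {a b : ℕ} (hab : a ≤ b) :
    |∑ k ∈ range b, x k - ∑ k ∈ range a, x k| = ∑ k ∈ Ico a b, x k := by
  rw [← sum_Ico_eq_sub _ hab]
  exact abs_of_nonneg (sum_nonneg fun k _ => hx k)

lemma sum_Ico_overlapWeight_mul (α : ℝ) (x : ℕ → ℝ) (hij : i < j) :
    ∑ k ∈ Ico i (j + 1), overlapWeight α i j k * x k
      = α * x i + 2 * α * ∑ k ∈ Ico (i + 1) j, x k + α * x j := by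
  rw [sum_Ico_succ_top hij.le, sum_eq_sum_Ico_succ_bot hij, mul_sum]
  have hmid : ∀ k ∈ Ico (i + 1) j, overlapWeight α i j k * x k = 2 * α * x k := fun k hk => by
    have := mem_Ico.mp hk
    rw [overlapWeight, if_neg (by omega)]
  rw [sum_congr rfl hmid]
  simp only [overlapWeight, true_or, or_true, if_true]

lemma prod_Ico_comp_overlapWeight (g : ℝ → ℝ) (α : ℝ) (hij : i < j) :
    ∏ k ∈ Ico i (j + 1), g (overlapWeight α i j k) = g α ^ 2 * g (2 * α) ^ (j - i - 1) := by
  rw [prod_Ico_succ_top hij.le, prod_eq_prod_Ico_succ_bot hij]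
  have hmid : ∀ k ∈ Ico (i + 1) j, g (overlapWeight α i j k) = g (2 * α) := fun k hk => by
    have := mem_Ico.mp hk
    rw [overlapWeight, if_neg (by omega)]
  rw [prod_congr rfl hmid, prod_const, Nat.card_Ico, show j - (i + 1) = j - i - 1 by omega]
  simp only [overlapWeight, true_or, or_true, if_true]
  ring

lemma crossed_exponent_eq_sum_overlapWeight (hx : ∀ k, 0 ≤ x k) (hij : i < j) (α : ℝ) :
    α * |∑ k ∈ range (i + 1), x k - ∑ k ∈ range j, x k|
        + α * |∑ k ∈ range (j + 1), x k - ∑ k ∈ range i, x k|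
      = ∑ k ∈ Ico i (j + 1), overlapWeight α i j k * x k := by
  rw [abs_sub_comm, abs_sum_range_sub_sum_range hx hij, abs_sum_range_sub_sum_range hx (by omega),
    sum_Ico_overlapWeight_mul α x hij, sum_Ico_succ_top hij.le, sum_eq_sum_Ico_succ_bot hij]
  ring

lemma aligned_exponent_eq_sum_overlapWeight (hx : ∀ k, 0 ≤ x k) (hij : i < j) (α : ℝ) :
    α * |∑ k ∈ range (i + 1), x k - ∑ k ∈ range (j + 1), x k|
        + α * |∑ k ∈ range i, x k - ∑ k ∈ range j, x k|
      = ∑ k ∈ Ico i (j + 1), overlapWeight α i j k * x k := by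
  rw [abs_sub_comm, abs_sum_range_sub_sum_range hx (by omega), abs_sub_comm,
    abs_sum_range_sub_sum_range hx hij.le, sum_Ico_overlapWeight_mul α x hij,
    sum_Ico_succ_top hij, sum_eq_sum_Ico_succ_bot hij]
  ring

end PartialSums

section Laplace

variable {Ω : Type*} [MeasurableSpace Ω] {P : Measure Ω} {Δ : ℕ → Ω → ℝ}

lemma integral_exp_neg_mul_eq_of_map_eq (hmeas : ∀ k, Measurable (Δ k))
    (hident : ∀ k, Measure.map (Δ k) P = Measure.map (Δ 0) P) (k : ℕ) (s : ℝ) :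
    ∫ ω, exp (-s * Δ k ω) ∂P = ∫ ω, exp (-s * Δ 0 ω) ∂P :=
  (IdentDistrib.comp ⟨(hmeas k).aemeasurable, (hmeas 0).aemeasurable, hident k⟩
    (by fun_prop : Measurable fun x => exp (-s * x))).integral_eq

lemma integral_exp_neg_sum_mul (hmeas : ∀ k, Measurable (Δ k)) (hiid : iIndepFun Δ P)
    (hident : ∀ k, Measure.map (Δ k) P = Measure.map (Δ 0) P) (s : Finset ℕ) (c : ℕ → ℝ) :
    ∫ ω, exp (-∑ k ∈ s, c k * Δ k ω) ∂P = ∏ k ∈ s, ∫ ω, exp (-c k * Δ 0 ω) ∂P := by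
  have hprod : ∀ ω, exp (-∑ k ∈ s, c k * Δ k ω) = ∏ k : s, exp (-c k * Δ k ω) := fun ω => by
    rw [← sum_neg_distrib, exp_sum, ← prod_coe_sort]
    simp only [neg_mul]
  simp_rw [hprod]
  rw [(hiid.precomp Subtype.val_injective).integral_fun_prod_comp
    (X := fun k : s => Δ k) (f := fun k x => exp (-c k * x))
    (fun k => (hmeas k).aemeasurable) (fun k => by fun_prop)]
  exact (prod_coe_sort s _).trans
    (prod_congr rfl fun k _ => integral_exp_neg_mul_eq_of_map_eq hmeas hident k (c k))

lemma integral_exp_neg_mul_lt_one [IsProbabilityMeasure P] {X : Ω → ℝ} (hX : Measurable X)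
    (hpos : ∀ ω, 0 < X ω) {s : ℝ} (hs : 0 < s) : ∫ ω, exp (-s * X ω) ∂P < 1 := by
  have hle : ∀ ω, exp (-s * X ω) ≤ 1 := fun ω => exp_le_one_iff.mpr (by nlinarith [hpos ω])
  have hint : Integrable (fun ω => exp (-s * X ω)) P :=
    Integrable.of_bound (by fun_prop) 1 (Eventually.of_forall fun ω => by
      rw [norm_of_nonneg (exp_pos _).le]; exact hle ω)
  have hsupp : Function.support (fun ω => 1 - exp (-s * X ω)) = Set.univ :=
    Set.eq_univ_of_forall fun ω => Function.mem_support.mpr <| sub_ne_zero.mpr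
      (exp_lt_one_iff.mpr (by nlinarith [hpos ω] : -s * X ω < 0)).ne'
  have hgap : 0 < ∫ ω, (1 - exp (-s * X ω)) ∂P := by
    rw [integral_pos_iff_support_of_nonneg (fun ω => sub_nonneg.mpr (hle ω))
      ((integrable_const 1).sub hint), hsupp]
    simp
  rw [integral_sub (integrable_const 1) hint] at hgap
  simpa using hgap

end Laplace

noncomputable def wickKernel (g : ℝ → ℝ) (α : ℝ) : ℕ → ℝ
  | 0 => 1 + g (2 * α)
  | m + 1 => 2 * g α ^ 2 * g (2 * α) ^ m

lemma hasSum_wickKernel (g : ℝ → ℝ) (α : ℝ) (h₀ : 0 ≤ g (2 * α)) (h₁ : g (2 * α) < 1) :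
    HasSum (wickKernel g α) (2 * g α ^ 2 * (1 - g (2 * α))⁻¹ + (1 + g (2 * α))) := by
  simpa [wickKernel] using (hasSum_nat_add_iff (f := wickKernel g α) 1).mp
    ((hasSum_geometric_of_lt_one h₀ h₁).mul_left (2 * g α ^ 2))
section WickSummand

variable {Ω : Type*} [MeasurableSpace Ω] {P : Measure Ω} {Δ : ℕ → Ω → ℝ} {t : ℕ → Ω → ℝ}
  {g : ℝ → ℝ} {α : ℝ}

noncomputable def wickSummand (P : Measure Ω) (α : ℝ) (t : ℕ → Ω → ℝ) (i j : ℕ) : ℝ :=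
  (∫ ω, exp (-α * |t (i + 1) ω - t j ω| - α * |t (j + 1) ω - t i ω|) ∂P)
    + ∫ ω, exp (-α * |t (i + 1) ω - t (j + 1) ω| - α * |t i ω - t j ω|) ∂P

lemma wickSummand_comm (i j : ℕ) : wickSummand P α t i j = wickSummand P α t j i := by
  simp only [wickSummand, abs_sub_comm (t (i + 1) _), abs_sub_comm (t i _)]
  congr 2
  ext ω
  congr 1
  ring

lemma wickSummand_self [IsProbabilityMeasure P] (hmeas : ∀ k, Measurable (Δ k))
    (hident : ∀ k, Measure.map (Δ k) P = Measure.map (Δ 0) P)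
    (ht : ∀ i ω, t i ω = ∑ k ∈ range i, Δ k ω) (hpos : ∀ k ω, 0 < Δ k ω)
    (hg : ∀ s, g s = ∫ ω, exp (-s * Δ 0 ω) ∂P) (i : ℕ) :
    wickSummand P α t i i = wickKernel g α 0 := by
  have hexp : ∀ ω, -α * |t (i + 1) ω - t i ω| - α * |t (i + 1) ω - t i ω| = -(2 * α) * Δ i ω :=
    fun ω => by
      rw [ht, ht, sum_range_succ, add_sub_cancel_left, abs_of_pos (hpos i ω)]
      ring
  simp only [wickSummand, hexp, sub_self, abs_zero, mul_zero, exp_zero, integral_const,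
    probReal_univ, smul_eq_mul, mul_one, wickKernel,
    integral_exp_neg_mul_eq_of_map_eq hmeas hident, ← hg]
  ring

lemma wickSummand_of_lt (hmeas : ∀ k, Measurable (Δ k)) (hiid : iIndepFun Δ P)
    (hident : ∀ k, Measure.map (Δ k) P = Measure.map (Δ 0) P)
    (ht : ∀ i ω, t i ω = ∑ k ∈ range i, Δ k ω) (hpos : ∀ k ω, 0 < Δ k ω)
    (hg : ∀ s, g s = ∫ ω, exp (-s * Δ 0 ω) ∂P) {i j : ℕ} (hij : i < j) :
    wickSummand P α t i j = wickKernel g α (j - i) := by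
  have hx : ∀ ω k, 0 ≤ Δ k ω := fun ω k => (hpos k ω).le
  have hexp₁ : ∀ ω, -α * |t (i + 1) ω - t j ω| - α * |t (j + 1) ω - t i ω|
      = -∑ k ∈ Ico i (j + 1), overlapWeight α i j k * Δ k ω := fun ω => by
    rw [← crossed_exponent_eq_sum_overlapWeight (hx ω) hij, ht, ht, ht, ht]
    ring
  have hexp₂ : ∀ ω, -α * |t (i + 1) ω - t (j + 1) ω| - α * |t i ω - t j ω|
      = -∑ k ∈ Ico i (j + 1), overlapWeight α i j k * Δ k ω := fun ω => by
    rw [← aligned_exponent_eq_sum_overlapWeight (hx ω) hij, ht, ht, ht, ht]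
    ring
  rw [show j - i = j - i - 1 + 1 by omega]
  simp only [wickSummand, hexp₁, hexp₂, integral_exp_neg_sum_mul hmeas hiid hident, ← hg,
    prod_Ico_comp_overlapWeight g α hij, wickKernel]
  ring

lemma wickSummand_eq_wickKernel_dist [IsProbabilityMeasure P] (hmeas : ∀ k, Measurable (Δ k))
    (hiid : iIndepFun Δ P) (hident : ∀ k, Measure.map (Δ k) P = Measure.map (Δ 0) P)
    (ht : ∀ i ω, t i ω = ∑ k ∈ range i, Δ k ω) (hpos : ∀ k ω, 0 < Δ k ω)
    (hg : ∀ s, g s = ∫ ω, exp (-s * Δ 0 ω) ∂P) (i j : ℕ) :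
    wickSummand P α t i j = wickKernel g α (Nat.dist i j) := by
  rcases lt_trichotomy i j with hij | rfl | hji
  · rw [wickSummand_of_lt hmeas hiid hident ht hpos hg hij, Nat.dist_eq_sub_of_le hij.le]
  · rw [wickSummand_self hmeas hident ht hpos hg, Nat.dist_self]
  · rw [wickSummand_comm, wickSummand_of_lt hmeas hiid hident ht hpos hg hji,
      Nat.dist_eq_sub_of_le_right hji.le]

end WickSummand

theorem normalized_wick_double_sum_tendsto_general
    {Ω : Type*} [MeasurableSpace Ω] (P : Measure Ω) [IsProbabilityMeasure P]
    (α : ℝ) (hα : 0 < α)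
    (Δ : ℕ → Ω → ℝ) (hΔmeas : ∀ k, Measurable (Δ k))
    (hΔpos : ∀ k ω, 0 < Δ k ω)
    (hiid : iIndepFun Δ P)
    (hident : ∀ k, Measure.map (Δ k) P = Measure.map (Δ 0) P)
    (t : ℕ → Ω → ℝ) (ht : ∀ i ω, t i ω = ∑ k ∈ Finset.range i, Δ k ω)
    (g : ℝ → ℝ) (hg : ∀ s, g s = ∫ ω, Real.exp (-s * Δ 0 ω) ∂P) :
    Tendsto (fun n : ℕ => (1 / (n : ℝ)) *
        ∑ i ∈ Finset.Icc 1 (n - 1), ∑ j ∈ Finset.Icc 1 (n - 1),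
          ((∫ ω, Real.exp (-α * |t (i + 1) ω - t j ω| - α * |t (j + 1) ω - t i ω|) ∂P)
            + ∫ ω, Real.exp (-α * |t (i + 1) ω - t (j + 1) ω| - α * |t i ω - t j ω|) ∂P))
      atTop
      (nhds (1 + g (2 * α)
        + 4 * (g α) ^ 2 * (1 + g (2 * α) / (1 - g (2 * α))))) := by
  have hq₀ : 0 ≤ g (2 * α) := hg _ ▸ integral_nonneg fun ω => (exp_pos _).le
  have hq₁ : g (2 * α) < 1 :=
    hg _ ▸ integral_exp_neg_mul_lt_one (hΔmeas 0) (hΔpos 0) (by linarith)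
  have hsummand : ∀ i j, wickSummand P α t i j = wickKernel g α (Nat.dist i j) :=
    wickSummand_eq_wickKernel_dist hΔmeas hiid hident ht hΔpos hg
  have hlim := tendsto_inv_mul_comp_sub_one
    (tendsto_inv_mul_sum_range_sum_range_comp_dist (hasSum_wickKernel g α hq₀ hq₁))
  convert hlim using 2 with n
  · rw [one_div, ← sum_Icc_one_sum_Icc_one_comp_dist]
    simp only [← hsummand]
    rfl
  · have : 1 - g (2 * α) ≠ 0 := by linarith
    simp only [wickKernel]
    field_simp
    ring

/-- Proposition 1, part (iii), core computation: For renewal times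
`t_i = Δ_1 + ⋯ + Δ_i` of an i.i.d. positive integrable sequence with Laplace transform
`g s = E[e^{-s Δ_1}]`, and `α > 0`,
`lim_{n→∞} (1/n) ∑_{i=1}^{n-1} ∑_{j=1}^{n-1}
   (E[e^{-α|t_{i+1}-t_j| - α|t_{j+1}-t_i|}] + E[e^{-α|t_{i+1}-t_{j+1}| - α|t_i-t_j|}])
 = 1 + g(2α) + 4 g(α)² (1 + g(2α)/(1 - g(2α)))`.
(Here `Δ` is indexed from `0`, so `t i = ∑_{k<i} Δ k` is `Δ_1 + ⋯ + Δ_i`.) -/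
theorem normalized_wick_double_sum_tendsto
    {Ω : Type*} [MeasurableSpace Ω] (P : Measure Ω) [IsProbabilityMeasure P]
    (α : ℝ) (hα : 0 < α)
    (Δ : ℕ → Ω → ℝ) (hΔmeas : ∀ k, Measurable (Δ k))
    (hΔpos : ∀ k ω, 0 < Δ k ω) (hΔint : ∀ k, Integrable (Δ k) P)
    (hiid : iIndepFun Δ P)
    (hident : ∀ k, Measure.map (Δ k) P = Measure.map (Δ 0) P)
    (t : ℕ → Ω → ℝ) (ht : ∀ i ω, t i ω = ∑ k ∈ Finset.range i, Δ k ω)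
    (g : ℝ → ℝ) (hg : ∀ s, g s = ∫ ω, Real.exp (-s * Δ 0 ω) ∂P) :
    Tendsto (fun n : ℕ => (1 / (n : ℝ)) *
        ∑ i ∈ Finset.Icc 1 (n - 1), ∑ j ∈ Finset.Icc 1 (n - 1),
          ((∫ ω, Real.exp (-α * |t (i + 1) ω - t j ω| - α * |t (j + 1) ω - t i ω|) ∂P)
            + ∫ ω, Real.exp (-α * |t (i + 1) ω - t (j + 1) ω| - α * |t i ω - t j ω|) ∂P))
      atTop
      (nhds (1 + g (2 * α)
        + 4 * (g α) ^ 2 * (1 + g (2 * α) / (1 - g (2 * α))))) :=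
  normalized_wick_double_sum_tendsto_general P α hα Δ hΔmeas hΔpos hiid hident t ht g hg
end

section
/- (Proposition 1, part (iv), core computation) The normalized double sum arising in Var(V_n) converges: lim_{n→∞} (2/n) Σ_{i=1}^{n} Σ_{j=1}^{n} E[e^{-2α|t_i-t_j|}] = 2 + 4K, where K = g(2α)/(1 - g(2α)); equivalently the limit equals 2(1 + g(2α))/(1 - g(2α)). Multiplied by η², this is the paper's asymptotic value of n·Var(V_n). -/
/-!
For `j ≤ i` the gap `t i - t j = Δ_j + ⋯ + Δ_{i-1}` is a sum of `i - j` independent copies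
of `Δ_0`, so `E[e^{-2α|t_i - t_j|}] = q ^ |i - j|` with `q = g(2α) ∈ [0, 1)`. The double sum
is then purely combinatorial: it equals `n + 2 ∑_{m<n} c m` with `c m = q + ⋯ + q^m`, which
tends to `q / (1 - q)`, and Cesàro averaging gives the limit `2 + 4 q / (1 - q)`.
-/

open MeasureTheory ProbabilityTheory Real Set Filter Finset

theorem sum_range_sum_range_pow_dist {R : Type*} [CommSemiring R] (q : R) (n : ℕ) :
    ∑ i ∈ range n, ∑ j ∈ range n, q ^ Nat.dist i j =
      n + 2 * ∑ m ∈ range n, ∑ k ∈ range m, q ^ (k + 1) := by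
  have row : ∀ m, ∑ j ∈ range m, q ^ Nat.dist m j = ∑ k ∈ range m, q ^ (k + 1) := by
    intro m
    rw [← sum_range_reflect]
    refine sum_congr rfl fun k hk => ?_
    have hk : k < m := mem_range.mp hk
    rw [Nat.dist_eq_sub_of_le_right (by omega), show m - (m - 1 - k) = k + 1 by omega]
  induction n with
  | zero => simp
  | succ n ih =>
    simp only [sum_range_succ (fun j => q ^ Nat.dist _ j)]
    rw [sum_range_succ, sum_add_distrib, ih]
    simp only [Nat.dist_comm _ n, row, Nat.dist_self, pow_zero, sum_range_succ]
    push_cast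
    ring

theorem tendsto_two_div_mul_sum_range_sum_range_pow_dist {q : ℝ} (hq : |q| < 1) :
    Tendsto (fun n : ℕ => (2 / (n : ℝ)) *
        ∑ i ∈ range n, ∑ j ∈ range n, q ^ Nat.dist i j)
      atTop (nhds (2 + 4 * (q / (1 - q)))) := by
  have partial_geom : Tendsto (fun m : ℕ => ∑ k ∈ range m, q ^ (k + 1)) atTop
      (nhds (q / (1 - q))) := by
    simpa only [pow_succ', ← mul_sum, div_eq_mul_inv] using
      ((hasSum_geometric_of_abs_lt_one hq).tendsto_sum_nat.const_mul q)
  refine ((partial_geom.cesaro.const_mul 4).const_add 2).congr' ?_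
  filter_upwards [eventually_ne_atTop 0] with n hn
  rw [sum_range_sum_range_pow_dist]
  field_simp
  ring

section Renewal

variable {Ω : Type*} [MeasurableSpace Ω] {μ : Measure Ω}

theorem mgf_lt_one_of_neg [IsProbabilityMeasure μ] {X : Ω → ℝ} (hX : AEMeasurable X μ)
    (hpos : ∀ᵐ ω ∂μ, 0 < X ω) {u : ℝ} (hu : u < 0) : mgf X μ u < 1 := by
  have hlt : ∀ᵐ ω ∂μ, exp (u * X ω) < 1 :=
    hpos.mono fun ω h => Real.exp_lt_one_iff.2 (mul_neg_of_neg_of_pos hu h)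
  have hint : Integrable (fun ω => exp (u * X ω)) μ :=
    (integrable_const 1).mono' (by fun_prop)
      (hlt.mono fun ω h => by rw [norm_of_nonneg (exp_pos _).le]; exact h.le)
  have hgap : 0 < ∫ ω, (1 - exp (u * X ω)) ∂μ := by
    rw [integral_pos_iff_support_of_nonneg_ae (hlt.mono fun ω h => sub_nonneg.2 h.le)
      ((integrable_const 1).sub hint), pos_iff_ne_zero]
    intro h0
    obtain ⟨ω, hω, hω'⟩ := ((measure_eq_zero_iff_ae_notMem.1 h0).and hlt).exists
    exact hω (sub_ne_zero.2 hω'.ne')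
  rw [integral_sub (integrable_const 1) hint, integral_const, probReal_univ, one_smul] at hgap
  exact sub_pos.1 hgap

theorem mgf_abs_sub_partialSum_eq_pow_dist {X : ℕ → Ω → ℝ}
    (hmeas : ∀ k, Measurable (X k)) (hnonneg : ∀ k ω, 0 ≤ X k ω) (hindep : iIndepFun X μ)
    (hident : ∀ k, IdentDistrib (X k) (X 0) μ μ) (u : ℝ) (i j : ℕ) :
    mgf (fun ω => |∑ k ∈ range i, X k ω - ∑ k ∈ range j, X k ω|) μ u =
      mgf (X 0) μ u ^ Nat.dist i j := by
  wlog hji : j ≤ i generalizing i j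
  · simpa only [abs_sub_comm, Nat.dist_comm] using this j i (by omega)
  have gap : (fun ω => |∑ k ∈ range i, X k ω - ∑ k ∈ range j, X k ω|) =
      ∑ k ∈ Ico j i, X k := by
    ext ω
    rw [← sum_Ico_eq_sub _ hji, Finset.sum_apply,
      abs_of_nonneg (sum_nonneg fun k _ => hnonneg k ω)]
  rw [gap, hindep.mgf_sum hmeas,
    prod_congr rfl fun k _ => mgf_congr_of_identDistrib _ _ (hident k) u, prod_const,
    Nat.card_Ico, Nat.dist_eq_sub_of_le_right hji]

end Renewal

theorem normalized_double_sum_varV_tendsto_general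
    {Ω : Type*} [MeasurableSpace Ω] (P : Measure Ω) [IsProbabilityMeasure P]
    (α : ℝ) (hα : 0 < α)
    (Δ : ℕ → Ω → ℝ) (hΔmeas : ∀ k, Measurable (Δ k))
    (hΔpos : ∀ k ω, 0 < Δ k ω)
    (hiid : iIndepFun Δ P)
    (hident : ∀ k, Measure.map (Δ k) P = Measure.map (Δ 0) P)
    (t : ℕ → Ω → ℝ) (ht : ∀ i ω, t i ω = ∑ k ∈ Finset.range i, Δ k ω)
    (g : ℝ → ℝ) (hg : ∀ s, g s = ∫ ω, Real.exp (-s * Δ 0 ω) ∂P) :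
    Tendsto (fun n : ℕ => (2 / (n : ℝ)) *
        ∑ i ∈ Finset.Icc 1 n, ∑ j ∈ Finset.Icc 1 n,
          ∫ ω, Real.exp (-(2 * α) * |t i ω - t j ω|) ∂P)
      atTop
      (nhds (2 + 4 * (g (2 * α) / (1 - g (2 * α))))) := by
  set q := mgf (Δ 0) P (-(2 * α))
  have hgq : g (2 * α) = q := hg _
  have hq : |q| < 1 := abs_lt.2
    ⟨by linarith [mgf_nonneg (X := Δ 0) (μ := P) (t := -(2 * α))],
      mgf_lt_one_of_neg (hΔmeas 0).aemeasurable (ae_of_all _ (hΔpos 0)) (by linarith)⟩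
  have hterm : ∀ i j, ∫ ω, exp (-(2 * α) * |t i ω - t j ω|) ∂P = q ^ Nat.dist i j := by
    intro i j
    simp only [ht]
    exact mgf_abs_sub_partialSum_eq_pow_dist hΔmeas (fun k ω => (hΔpos k ω).le) hiid
      (fun k => ⟨(hΔmeas k).aemeasurable, (hΔmeas 0).aemeasurable, hident k⟩) _ i j
  have shift : ∀ n, ∑ i ∈ Icc 1 n, ∑ j ∈ Icc 1 n, q ^ Nat.dist i j =
      ∑ i ∈ range n, ∑ j ∈ range n, q ^ Nat.dist i j := by
    intro n
    simp only [← Finset.Ico_add_one_right_eq_Icc, sum_Ico_eq_sum_range, Nat.add_sub_cancel,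
      Nat.dist_add_add_left]
  rw [hgq]
  simpa only [hterm, shift] using tendsto_two_div_mul_sum_range_sum_range_pow_dist hq

/-- Proposition 1, part (iv), core computation: For renewal times
`t_i = Δ_1 + ⋯ + Δ_i` of an i.i.d. positive integrable sequence with Laplace transform
`g s = E[e^{-s Δ_1}]`, and `α > 0`,
`lim_{n→∞} (2/n) ∑_{i=1}^{n} ∑_{j=1}^{n} E[e^{-2α|t_i-t_j|}] = 2 + 4K`
where `K = g(2α)/(1 - g(2α))`.
(Here `Δ` is indexed from `0`, so `t i = ∑_{k<i} Δ k` is `Δ_1 + ⋯ + Δ_i`.) -/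
theorem normalized_double_sum_varV_tendsto
    {Ω : Type*} [MeasurableSpace Ω] (P : Measure Ω) [IsProbabilityMeasure P]
    (α : ℝ) (hα : 0 < α)
    (Δ : ℕ → Ω → ℝ) (hΔmeas : ∀ k, Measurable (Δ k))
    (hΔpos : ∀ k ω, 0 < Δ k ω) (hΔint : ∀ k, Integrable (Δ k) P)
    (hiid : iIndepFun Δ P)
    (hident : ∀ k, Measure.map (Δ k) P = Measure.map (Δ 0) P)
    (t : ℕ → Ω → ℝ) (ht : ∀ i ω, t i ω = ∑ k ∈ Finset.range i, Δ k ω)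
    (g : ℝ → ℝ) (hg : ∀ s, g s = ∫ ω, Real.exp (-s * Δ 0 ω) ∂P) :
    Tendsto (fun n : ℕ => (2 / (n : ℝ)) *
        ∑ i ∈ Finset.Icc 1 n, ∑ j ∈ Finset.Icc 1 n,
          ∫ ω, Real.exp (-(2 * α) * |t i ω - t j ω|) ∂P)
      atTop
      (nhds (2 + 4 * (g (2 * α) / (1 - g (2 * α))))) :=
  normalized_double_sum_varV_tendsto_general P α hα Δ hΔmeas hΔpos hiid hident t ht g hg
end

section
/- (Proposition 2, bias) Define the second-order expansion ĝ_n = g + (T_n - ηg)/η - g(V_n - η)/η + g(V_n - η)²/η² - (T_n - ηg)(V_n - η)/η². Then lim_{n→∞} n (E[ĝ_n] - g) = -3g. -/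
/-!
Take expectations term by term. Since `E[V_n] = η`, the linear `V`-term drops out and the two
quadratic terms become `Var(V_n)` and `Cov(T_n, V_n)`; since `E[T_n] - ηg = -ηg/n`,
`n (E[ĝ_n] - g) = -g + (g/η²) n Var(V_n) - (1/η²) n Cov(T_n, V_n)`, which tends to
`-g + g(2 + 4K) - (4g + 4gK) = -3g`.
-/

open MeasureTheory ProbabilityTheory Filter

/-- The covariance `Cov(X, Y) = E[(X - E X)(Y - E Y)]`. -/
noncomputable def cov {Ω : Type*} [MeasurableSpace Ω] (P : Measure Ω) (X Y : Ω → ℝ) : ℝ :=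
  ∫ ω, (X ω - ∫ ω', X ω' ∂P) * (Y ω - ∫ ω', Y ω' ∂P) ∂P

section Moments

variable {Ω : Type*} [MeasurableSpace Ω] {P : Measure Ω} {X Y : Ω → ℝ}

lemma integral_sub_sq_eq_variance (hX : AEMeasurable X P) {b : ℝ} (hXb : ∫ ω, X ω ∂P = b) :
    ∫ ω, (X ω - b) ^ 2 ∂P = variance X P := by
  rw [variance_eq_integral hX, hXb]

variable [IsProbabilityMeasure P]

lemma integral_sub_integral (hX : Integrable X P) : ∫ ω, (X ω - ∫ ω', X ω' ∂P) ∂P = 0 := by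
  simp [integral_sub hX (integrable_const _)]

lemma integral_sub_mul_sub_eq_cov (hX : MemLp X 2 P) (hY : MemLp Y 2 P) (a : ℝ) {b : ℝ}
    (hYb : ∫ ω, Y ω ∂P = b) : ∫ ω, (X ω - a) * (Y ω - b) ∂P = cov P X Y := by
  subst hYb
  have hcentered : MemLp (fun ω => Y ω - ∫ ω', Y ω' ∂P) 2 P := hY.sub (memLp_const _)
  have hsplit : ∀ ω, (X ω - a) * (Y ω - ∫ ω', Y ω' ∂P)
      = (X ω - ∫ ω', X ω' ∂P) * (Y ω - ∫ ω', Y ω' ∂P)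
        + ((∫ ω', X ω' ∂P) - a) * (Y ω - ∫ ω', Y ω' ∂P) := fun ω => by ring
  have hcov : Integrable (fun ω => (X ω - ∫ ω', X ω' ∂P) * (Y ω - ∫ ω', Y ω' ∂P)) P :=
    (hX.sub (memLp_const _)).integrable_mul hcentered
  simp_rw [hsplit]
  rw [integral_add hcov ((hcentered.integrable one_le_two).const_mul _),
    integral_const_mul, integral_sub_integral (hY.integrable one_le_two), mul_zero, add_zero]
  rfl

end Moments

section Expansion

variable {Ω : Type*} [MeasurableSpace Ω] {P : Measure Ω} [IsProbabilityMeasure P]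
  {T V : Ω → ℝ}

lemma integral_ratio_expansion (hT : MemLp T 2 P) (hV : MemLp V 2 P) (g : ℝ) {η : ℝ}
    (hEV : ∫ ω, V ω ∂P = η) :
    ∫ ω, (g + (T ω - η * g) / η - g * (V ω - η) / η + g * (V ω - η) ^ 2 / η ^ 2
        - (T ω - η * g) * (V ω - η) / η ^ 2) ∂P
      = g + ((∫ ω, T ω ∂P) - η * g) / η + g * variance V P / η ^ 2 - cov P T V / η ^ 2 := by
  have hTc : MemLp (fun ω => T ω - η * g) 2 P := hT.sub (memLp_const _)
  have hVc : MemLp (fun ω => V ω - η) 2 P := hV.sub (memLp_const _)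
  have iT : Integrable (fun ω => (T ω - η * g) / η) P :=
    (hTc.integrable one_le_two).div_const η
  have iV : Integrable (fun ω => g * (V ω - η) / η) P :=
    ((hVc.integrable one_le_two).const_mul g).div_const η
  have iVV : Integrable (fun ω => g * (V ω - η) ^ 2 / η ^ 2) P :=
    ((hVc.integrable_sq).const_mul g).div_const _
  have iTV : Integrable (fun ω => (T ω - η * g) * (V ω - η) / η ^ 2) P :=
    (hTc.integrable_mul hVc).div_const _
  rw [integral_sub (by fun_prop) iTV, integral_add (by fun_prop) iVV,
    integral_sub (by fun_prop) iV, integral_add (integrable_const g) iT,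
    integral_const, integral_div, integral_div, integral_div, integral_div,
    integral_const_mul, integral_const_mul,
    integral_sub (hT.integrable one_le_two) (integrable_const _), integral_const,
    integral_sub (hV.integrable one_le_two) (integrable_const _), integral_const, hEV,
    integral_sub_sq_eq_variance hV.aemeasurable hEV, integral_sub_mul_sub_eq_cov hT hV _ hEV]
  simp

end Expansion

theorem bias_of_ratio_estimator_expansion_general
    {Ω : Type*} [MeasurableSpace Ω] (P : Measure Ω) [IsProbabilityMeasure P]
    (η g K : ℝ) (hη : 0 < η)
    (T V : ℕ → Ω → ℝ)
    (hT2 : ∀ n, MemLp (T n) 2 P) (hV2 : ∀ n, MemLp (V n) 2 P)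
    (hET : ∀ n : ℕ, 2 ≤ n → (∫ ω, T n ω ∂P) = (1 - 1 / (n : ℝ)) * η * g)
    (hEV : ∀ n : ℕ, 1 ≤ n → (∫ ω, V n ω ∂P) = η)
    (hVarV : Tendsto (fun n : ℕ => (n : ℝ) * variance (V n) P) atTop
      (nhds (η ^ 2 * (2 + 4 * K))))
    (hCovTV : Tendsto (fun n : ℕ => (n : ℝ) * cov P (T n) (V n)) atTop
      (nhds (η ^ 2 * (4 * g + 4 * g * K)))) :
    Tendsto (fun n : ℕ => (n : ℝ) *
        ((∫ ω, (g + (T n ω - η * g) / η - g * (V n ω - η) / η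
            + g * (V n ω - η) ^ 2 / η ^ 2
            - (T n ω - η * g) * (V n ω - η) / η ^ 2) ∂P) - g))
      atTop (nhds (-3 * g)) := by
  have hscaled : ∀ᶠ n : ℕ in atTop,
      -g + g / η ^ 2 * ((n : ℝ) * variance (V n) P) - 1 / η ^ 2 * ((n : ℝ) * cov P (T n) (V n))
        = (n : ℝ) * ((∫ ω, (g + (T n ω - η * g) / η - g * (V n ω - η) / η
            + g * (V n ω - η) ^ 2 / η ^ 2
            - (T n ω - η * g) * (V n ω - η) / η ^ 2) ∂P) - g) := by
    filter_upwards [eventually_ge_atTop 2] with n hn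
    rw [integral_ratio_expansion (hT2 n) (hV2 n) g (hEV n (by omega)), hET n hn]
    field_simp
    ring
  refine Tendsto.congr' hscaled ?_
  convert ((tendsto_const_nhds (x := -g)).add (hVarV.const_mul (g / η ^ 2))).sub
    (hCovTV.const_mul (1 / η ^ 2)) using 2
  field_simp
  ring

/-- Proposition 2, bias: Given square-integrable `T_n, V_n` with
`E[T_n] = (1 - 1/n) η g`, `E[V_n] = η`, `n Var(V_n) → η²(2 + 4K)` and
`n Cov(T_n, V_n) → η²(4g + 4gK)`, the second-order expansion
`ĝ_n = g + (T_n - ηg)/η - g(V_n - η)/η + g(V_n - η)²/η² - (T_n - ηg)(V_n - η)/η²`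
satisfies `lim_{n→∞} n (E[ĝ_n] - g) = -3g`. -/
theorem bias_of_ratio_estimator_expansion
    {Ω : Type*} [MeasurableSpace Ω] (P : Measure Ω) [IsProbabilityMeasure P]
    (η g K : ℝ) (hη : 0 < η) (hg0 : 0 < g) (hg1 : g < 1) (hK : 0 ≤ K)
    (T V : ℕ → Ω → ℝ)
    (hT2 : ∀ n, MemLp (T n) 2 P) (hV2 : ∀ n, MemLp (V n) 2 P)
    (hET : ∀ n : ℕ, 2 ≤ n → (∫ ω, T n ω ∂P) = (1 - 1 / (n : ℝ)) * η * g)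
    (hEV : ∀ n : ℕ, 1 ≤ n → (∫ ω, V n ω ∂P) = η)
    (hVarV : Tendsto (fun n : ℕ => (n : ℝ) * variance (V n) P) atTop
      (nhds (η ^ 2 * (2 + 4 * K))))
    (hCovTV : Tendsto (fun n : ℕ => (n : ℝ) * cov P (T n) (V n)) atTop
      (nhds (η ^ 2 * (4 * g + 4 * g * K)))) :
    Tendsto (fun n : ℕ => (n : ℝ) *
        ((∫ ω, (g + (T n ω - η * g) / η - g * (V n ω - η) / η
            + g * (V n ω - η) ^ 2 / η ^ 2
            - (T n ω - η * g) * (V n ω - η) / η ^ 2) ∂P) - g))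
      atTop (nhds (-3 * g)) :=
  bias_of_ratio_estimator_expansion_general P η g K hη T V hT2 hV2 hET hEV hVarV hCovTV
end

section
/- (Section 4, asymptotic bias for exponential sampling) Let α, β > 0 and let g : (0,∞) → ℝ be given by g(x) = β/(β + x). Then g is twice differentiable with g'(x) = -β/(β+x)² and g''(x) = 2β/(β+x)³, and the asymptotic bias expression of Theorem 1 evaluates to -3g(α)/g'(α) - g''(α)(1 + g(2α) - 2g(α)²)/(2 g'(α)³) = (β + α)(2α³ + 3β³ + 8αβ² + 6α²β)/(β²(β + 2α)). -/
theorem hasDerivAt_const_div_add_pow (c a : ℝ) (n : ℕ) {x : ℝ} (hx : a + x ≠ 0) :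
    HasDerivAt (fun y => c / (a + y) ^ n) (-(n * c) / (a + x) ^ (n + 1)) x := by
  have hpow : HasDerivAt (fun y => (a + y) ^ n) (n * (a + x) ^ (n - 1)) x := by
    simpa using ((hasDerivAt_id x).const_add a).fun_pow n
  refine ((hasDerivAt_const x c).fun_div hpow (pow_ne_zero n hx)).congr_deriv ?_
  rcases n with _ | n
  · simp
  · rw [Nat.add_sub_cancel]
    field_simp
    ring

/-- Section 4, asymptotic bias for exponential sampling: For
`g x = β/(β + x)` with `α, β > 0`, `g` is twice differentiable on `(0,∞)` with
`g' x = -β/(β+x)²` and `g'' x = 2β/(β+x)³`, and the asymptotic bias expression of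
Theorem 1 evaluates to
`-3g(α)/g'(α) - g''(α)(1 + g(2α) - 2g(α)²)/(2 g'(α)³)
  = (β + α)(2α³ + 3β³ + 8αβ² + 6α²β)/(β²(β + 2α))`. -/
theorem asymptotic_bias_exponential_sampling
    (α β : ℝ) (hα : 0 < α) (hβ : 0 < β)
    (g g' g'' : ℝ → ℝ)
    (hg : ∀ x, g x = β / (β + x))
    (hg' : ∀ x, g' x = -β / (β + x) ^ 2)
    (hg'' : ∀ x, g'' x = 2 * β / (β + x) ^ 3) :
    (∀ x : ℝ, 0 < x → HasDerivAt g (g' x) x ∧ HasDerivAt g' (g'' x) x) ∧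
    -3 * g α / g' α - g'' α * (1 + g (2 * α) - 2 * (g α) ^ 2) / (2 * (g' α) ^ 3)
      = (β + α) * (2 * α ^ 3 + 3 * β ^ 3 + 8 * α * β ^ 2 + 6 * α ^ 2 * β)
          / (β ^ 2 * (β + 2 * α)) := by
  refine ⟨fun x hx => ?_, ?_⟩
  · have hβx : β + x ≠ 0 := by positivity
    have hg_eq : g = fun y => β / (β + y) ^ 1 := funext fun y => by rw [hg, pow_one]
    rw [hg' x, hg'' x, hg_eq, funext hg']
    constructor
    · convert hasDerivAt_const_div_add_pow β β 1 hβx using 1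
      ring
    · convert hasDerivAt_const_div_add_pow (-β) β 2 hβx using 1
      ring
  · have hβα : β + α ≠ 0 := by positivity
    have hβ2α : β + 2 * α ≠ 0 := by positivity
    rw [hg, hg, hg', hg'']
    field_simp
    ring
end
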